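/- For every natural number N ≥ 1 and every n ≥ 1, the response performance of the FIFO buffer of capacity N+2 satisfies rp_FIFO(n) = 2n; in particular the supremum defining rp_FIFO(n) is attained and finite. -/

import Mathlib

/-- Labels of steps in the FIFO transition system. -/
inductive FLabel : Type
  | tick | ins | outs
deriving DecidableEq

/-- States of the FIFO transition system: a fill level `i ∈ {0, …, N+2}` together
with an urgency flag (`true` = urgent, `false` = relaxed). -/
abbrev FState : Type := ℕ × Bool

/-- Steps of the FIFO transition system (for the buffer of capacity `N + 2`). -/
inductive FStep (N : ℕ) : FState → FLabel → FState → Prop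
  | tick (i : ℕ) : FStep N (i, false) FLabel.tick (i, true)
  | ins (i : ℕ) (u : Bool) (h : i < N + 2) : FStep N (i, u) FLabel.ins (i + 1, false)
  | outs (i : ℕ) (u : Bool) (h : 0 < i) : FStep N (i, u) FLabel.outs (i - 1, false)

/-- `FPath N s ls` : `ls` is the sequence of labels of a finite path of consecutive
steps starting in state `s`. -/
inductive FPath (N : ℕ) : FState → List FLabel → Prop
  | nil (s : FState) : FPath N s []
  | cons {s s' : FState} {l : FLabel} {ls : List FLabel} :
      FStep N s l s' → FPath N s' ls → FPath N s (l :: ls)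

/-- A path of the FIFO system: a path starting in the initial state `(0, relaxed)`. -/
def FifoPath (N : ℕ) (ls : List FLabel) : Prop := FPath N (0, false) ls

/-- An `n`-admissible path of the FIFO system: at most `n` `in`-steps and
at most `n - 1` `out`-steps. -/
def FifoAdmissible (N n : ℕ) (ls : List FLabel) : Prop :=
  FifoPath N ls ∧ ls.count FLabel.ins ≤ n ∧ ls.count FLabel.outs ≤ n - 1

/-- The response performance of the FIFO buffer: the supremum (in `ℕ∞`) of the
number of ticks over all `n`-admissible paths. -/
noncomputable def rpFifo (N n : ℕ) : ℕ∞ :=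
  sSup {k : ℕ∞ | ∃ ls : List FLabel, FifoAdmissible N n ls ∧ (ls.count FLabel.tick : ℕ∞) = k}

/-!
A tick makes the state urgent and only an `in`- or `out`-step relaxes it again, so along any
path from a relaxed state the ticks are at most one more than the other steps; an `n`-admissible
path therefore has at most `n + (n - 1) + 1 = 2n` ticks. The bound is attained by repeating
"tick, in, tick, out" `n - 1` times and finishing with "tick, in, tick".
-/

open FLabel

def responsePath : ℕ → List FLabel
  | 0 => [tick, ins, tick]
  | m + 1 => tick :: ins :: tick :: outs :: responsePath m

@[simp]
lemma count_tick_responsePath (m : ℕ) : (responsePath m).count tick = 2 * m + 2 := by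
  induction m with
  | zero => rfl
  | succ m ih => simp [responsePath, ih]; ring

@[simp]
lemma count_ins_responsePath (m : ℕ) : (responsePath m).count ins = m + 1 := by
  induction m with
  | zero => rfl
  | succ m ih => simp [responsePath, ih]

@[simp]
lemma count_outs_responsePath (m : ℕ) : (responsePath m).count outs = m := by
  induction m with
  | zero => rfl
  | succ m ih => simp [responsePath, ih]

lemma fPath_responsePath {N i : ℕ} (hi : i < N + 2) (m : ℕ) :
    FPath N (i, false) (responsePath m) := by
  have tick_ins_tick {ls : List FLabel} (h : FPath N (i + 1, true) ls) :
      FPath N (i, false) (tick :: ins :: tick :: ls) :=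
    .cons (.tick i) (.cons (.ins i true hi) (.cons (.tick (i + 1)) h))
  induction m with
  | zero => exact tick_ins_tick (.nil _)
  | succ m ih => exact tick_ins_tick (.cons (.outs (i + 1) true i.succ_pos) ih)

lemma FPath.count_tick_le {N : ℕ} {s : FState} {ls : List FLabel} (h : FPath N s ls) :
    ls.count tick ≤ ls.count ins + ls.count outs + (!s.2).toNat := by
  induction h with
  | nil => simp
  | cons step _ ih =>
    cases step with
    | tick => simp_all
    | ins _ u => cases u <;> simp_all <;> omega
    | outs _ u => cases u <;> simp_all <;> omega

lemma FifoAdmissible.count_tick_le {N n : ℕ} {ls : List FLabel} (h : FifoAdmissible N n ls)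
    (hn : 1 ≤ n) : ls.count tick ≤ 2 * n := by
  obtain ⟨hpath, hins, houts⟩ := h
  have hticks := hpath.count_tick_le
  simp only [Bool.not_false, Bool.toNat_true] at hticks
  omega

lemma fifoAdmissible_responsePath (N : ℕ) {n : ℕ} (hn : 1 ≤ n) :
    FifoAdmissible N n (responsePath (n - 1)) :=
  ⟨fPath_responsePath (by omega) _, by simp; omega, by simp⟩

theorem fifo_response_performance_general (N n : ℕ) (hn : 1 ≤ n) :
    rpFifo N n = (2 * n : ℕ) ∧
    ∃ ls : List FLabel, FifoAdmissible N n ls ∧ ls.count FLabel.tick = 2 * n := by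
  have hadm := fifoAdmissible_responsePath N hn
  have hticks : (responsePath (n - 1)).count tick = 2 * n := by simp; omega
  refine ⟨IsGreatest.csSup_eq ⟨⟨_, hadm, by rw [hticks]⟩, ?_⟩, _, hadm, hticks⟩
  rintro _ ⟨ls, hls, rfl⟩
  exact_mod_cast hls.count_tick_le hn

/-- For every `N ≥ 1` and `n ≥ 1`, the response performance of the FIFO buffer of
capacity `N + 2` satisfies `rp_FIFO(n) = 2n`; in particular the supremum defining
`rp_FIFO(n)` is attained (by an admissible path with exactly `2n` ticks) and finite. -/
theorem fifo_response_performance (N n : ℕ) (hN : 1 ≤ N) (hn : 1 ≤ n) :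
    rpFifo N n = (2 * n : ℕ) ∧
    ∃ ls : List FLabel, FifoAdmissible N n ls ∧ ls.count FLabel.tick = 2 * n :=
  fifo_response_performance_general N n hn
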